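/- Let b = 3π/2 and q = 1/((1+b²) sinh 1), and let k(t,s) = (1/sinh 1)·cosh(1−max(t,s))cosh(min(t,s)). Then for every t ∈ [2/3, 1], ∫_{2/3}^{1} k(t,s) sin(bs) ds = q (sinh(1) sin(bt) − b cosh(2/3) cosh(1−t)). -/

import Mathlib

/-!
On `[2/3, 1]` the kernel splits at `s = t` into `cosh (1 - t) cosh s` and `cosh t cosh (1 - s)`,
so the integral is a combination of two integrals of `cosh · sin (b ·)`, which have elementary
antiderivatives. For `b = 3π/2` the boundary terms at `2/3` and `1` are values of `sin` and `cos`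
at `π` and `3π/2`, and the two pieces recombine through `sinh (1 - t) cosh t + cosh (1 - t) sinh t
= sinh 1`.
-/

open Real Set intervalIntegral

theorem integral_mul_max_min_eq {g h f : ℝ → ℝ} (hg : Continuous g) (hh : Continuous h)
    (hf : Continuous f) {a t c : ℝ} (hat : a ≤ t) (htc : t ≤ c) :
    ∫ s in a..c, g (max t s) * h (min t s) * f s =
      g t * (∫ s in a..t, h s * f s) + h t * ∫ s in t..c, g s * f s := by
  have hcont : Continuous fun s => g (max t s) * h (min t s) * f s := by fun_prop
  have hleft : ∫ s in a..t, g (max t s) * h (min t s) * f s = g t * ∫ s in a..t, h s * f s := by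
    rw [← integral_const_mul]
    refine integral_congr fun s hs => ?_
    rw [uIcc_of_le hat] at hs
    simp only [max_eq_left hs.2, min_eq_right hs.2]
    ring
  have hright : ∫ s in t..c, g (max t s) * h (min t s) * f s = h t * ∫ s in t..c, g s * f s := by
    rw [← integral_const_mul]
    refine integral_congr fun s hs => ?_
    rw [uIcc_of_le htc] at hs
    simp only [max_eq_right hs.1, min_eq_left hs.1]
    ring
  rw [← integral_add_adjacent_intervals (hcont.intervalIntegrable a t)
    (hcont.intervalIntegrable t c), hleft, hright]

theorem hasDerivAt_sin_mul (b s : ℝ) : HasDerivAt (fun x => sin (b * x)) (cos (b * s) * b) s :=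
  (hasDerivAt_sin (b * s)).comp s ((hasDerivAt_id s).const_mul b |>.congr_deriv (mul_one b))

theorem hasDerivAt_cos_mul (b s : ℝ) : HasDerivAt (fun x => cos (b * x)) (-sin (b * s) * b) s :=
  (hasDerivAt_cos (b * s)).comp s ((hasDerivAt_id s).const_mul b |>.congr_deriv (mul_one b))

theorem integral_cosh_mul_sin (b x y : ℝ) :
    ∫ s in x..y, cosh s * sin (b * s) =
      (sinh y * sin (b * y) - b * cosh y * cos (b * y)) / (1 + b ^ 2) -
        (sinh x * sin (b * x) - b * cosh x * cos (b * x)) / (1 + b ^ 2) := by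
  have hF (s : ℝ) : HasDerivAt
      (fun x => (sinh x * sin (b * x) - b * cosh x * cos (b * x)) / (1 + b ^ 2))
      (cosh s * sin (b * s)) s := by
    refine ((((hasDerivAt_sinh s).mul (hasDerivAt_sin_mul b s)).sub
      (((hasDerivAt_cosh s).const_mul b).mul (hasDerivAt_cos_mul b s))).div_const
        (1 + b ^ 2)).congr_deriv ?_
    field_simp
    ring
  exact integral_eq_sub_of_hasDerivAt (fun s _ => hF s)
    ((by fun_prop : Continuous fun s => cosh s * sin (b * s)).intervalIntegrable _ _)

theorem integral_cosh_sub_mul_sin (b c x y : ℝ) :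
    ∫ s in x..y, cosh (c - s) * sin (b * s) =
      (-(sinh (c - y) * sin (b * y)) - b * cosh (c - y) * cos (b * y)) / (1 + b ^ 2) -
        (-(sinh (c - x) * sin (b * x)) - b * cosh (c - x) * cos (b * x)) / (1 + b ^ 2) := by
  have hF (s : ℝ) : HasDerivAt
      (fun x => (-(sinh (c - x) * sin (b * x)) - b * cosh (c - x) * cos (b * x)) / (1 + b ^ 2))
      (cosh (c - s) * sin (b * s)) s := by
    have hsub : HasDerivAt (fun x : ℝ => c - x) (-1) s := (hasDerivAt_id' s).const_sub c
    refine (((((hasDerivAt_sinh (c - s)).comp s hsub).mul (hasDerivAt_sin_mul b s)).neg.sub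
      ((((hasDerivAt_cosh (c - s)).comp s hsub).const_mul b).mul
        (hasDerivAt_cos_mul b s))).div_const (1 + b ^ 2)).congr_deriv ?_
    simp only [Function.comp_apply]
    field_simp
    ring
  exact integral_eq_sub_of_hasDerivAt (fun s _ => hF s)
    ((by fun_prop : Continuous fun s => cosh (c - s) * sin (b * s)).intervalIntegrable _ _)

theorem stmt_6 (b q : ℝ) (hb : b = 3 * π / 2) (hq : q = 1 / ((1 + b ^ 2) * Real.sinh 1))
    (k : ℝ → ℝ → ℝ)
    (hk : ∀ t s, k t s = (1 / Real.sinh 1) * Real.cosh (1 - max t s) * Real.cosh (min t s)) :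
    ∀ t ∈ Icc (2 / 3 : ℝ) 1,
      ∫ s in (2 / 3 : ℝ)..1, k t s * Real.sin (b * s) =
        q * (Real.sinh 1 * Real.sin (b * t) - b * Real.cosh (2 / 3) * Real.cosh (1 - t)) := by
  rintro t ⟨ht₀, ht₁⟩
  have hsplit := integral_mul_max_min_eq (g := fun u => cosh (1 - u)) (h := cosh)
    (f := fun s => sin (b * s)) (by fun_prop) continuous_cosh (by fun_prop) ht₀ ht₁
  have hkernel : (fun s => k t s * sin (b * s)) =
      fun s => 1 / sinh 1 * (cosh (1 - max t s) * cosh (min t s) * sin (b * s)) := by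
    funext s
    rw [hk]
    ring
  rw [hkernel, integral_const_mul, hsplit, integral_cosh_mul_sin, integral_cosh_sub_mul_sin]
  have hπ : b * (2 / 3) = π := by rw [hb]; ring
  have h3π2 : b * 1 = π + π / 2 := by rw [hb]; ring
  rw [hπ, h3π2, sin_pi, cos_pi, sin_add_pi_div_two, cos_add_pi_div_two, sin_pi, cos_pi, sub_self,
    sinh_zero, cosh_zero]
  have hsinh : sinh (1 - t) * cosh t + cosh (1 - t) * sinh t = sinh 1 := by
    rw [← sinh_add, sub_add_cancel]
  have hsinh₀ : sinh 1 ≠ 0 := sinh_ne_zero.mpr one_ne_zero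
  rw [hq]
  field_simp
  rw [mul_comm t b]
  linear_combination sin (b * t) * hsinh
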